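/- Let j : ℤ → [0,1] → ℝ be a family of functions such that each j k is continuous on [0,1], j k t ≤ j (k+1) t for all k ∈ ℤ and t ∈ [0,1], and the set { j k 0 : k ∈ ℤ } is unbounded above and unbounded below. Suppose l ∈ ℤ satisfies j (k + l) 0 = j k 1 for all k ∈ ℤ (l is a spectral-flow witness for the family j). If j k t ≠ 0 for every k ∈ ℤ and every t ∈ [0,1], then l = 0. -/
import Mathlib


/-- Lemma 4.1(iv) in eigenvalue-curve form: if no eigenvalue curve of a path of
self-adjoint elliptic operators vanishes, then any spectral-flow witness `l`
(i.e. `j (k + l) 0 = j k 1` for all `k`) is zero. -/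
theorem spectral_flow_zero_of_invertible (j : ℤ → ℝ → ℝ) (l : ℤ)
    (hcont : ∀ k : ℤ, ContinuousOn (j k) (Set.Icc (0 : ℝ) 1))
    (hmono : ∀ k : ℤ, ∀ t ∈ Set.Icc (0 : ℝ) 1, j k t ≤ j (k + 1) t)
    (habove : ∀ C : ℝ, ∃ k : ℤ, C < j k 0)
    (hbelow : ∀ C : ℝ, ∃ k : ℤ, j k 0 < C)
    (hl : ∀ k : ℤ, j (k + l) 0 = j k 1)
    (hinv : ∀ k : ℤ, ∀ t ∈ Set.Icc (0 : ℝ) 1, j k t ≠ 0) :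
    l = 0 := by
  have h0 : (0 : ℝ) ∈ Set.Icc (0 : ℝ) 1 := by norm_num
  have h1 : (1 : ℝ) ∈ Set.Icc (0 : ℝ) 1 := by norm_num
  -- monotone in k at t = 0
  have mono0 : Monotone (fun k : ℤ => j k 0) := by
    apply monotone_int_of_le_succ
    intro k
    exact hmono k 0 h0
  -- sign constancy along each curve
  have sign : ∀ k : ℤ, 0 < j k 0 ↔ 0 < j k 1 := by
    intro k
    constructor
    · intro hp
      rcases (hinv k 1 h1).lt_or_gt with hn | hn
      · exfalso
        have : (0 : ℝ) ∈ Set.Icc (j k 1) (j k 0) := ⟨le_of_lt hn, le_of_lt hp⟩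
        have := intermediate_value_Icc' (by norm_num : (0:ℝ) ≤ 1) (hcont k) this
        rcases this with ⟨t, ht, ht0⟩
        exact hinv k t ht ht0
      · exact hn
    · intro hp
      rcases (hinv k 0 h0).lt_or_gt with hn | hn
      · exfalso
        have : (0 : ℝ) ∈ Set.Icc (j k 0) (j k 1) := ⟨le_of_lt hn, le_of_lt hp⟩
        have := intermediate_value_Icc (by norm_num : (0:ℝ) ≤ 1) (hcont k) this
        rcases this with ⟨t, ht, ht0⟩
        exact hinv k t ht ht0
      · exact hn
  -- shift invariance of positivity at t = 0
  have shift : ∀ k : ℤ, 0 < j (k + l) 0 ↔ 0 < j k 0 := by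
    intro k
    rw [hl k]
    exact (sign k).symm
  -- S is nonempty and bounded below
  obtain ⟨kp, hkp⟩ := habove 0
  obtain ⟨kn, hkn⟩ := hbelow 0
  have bdd : ∀ k : ℤ, 0 < j k 0 → kn + 1 ≤ k := by
    intro k hk
    by_contra h
    push_neg at h
    have : k ≤ kn := by omega
    have := mono0 this
    simp only at this
    linarith
  -- least element of S
  obtain ⟨m, hm, hmin⟩ := Int.exists_least_of_bdd
    (P := fun k => 0 < j k 0) ⟨kn + 1, fun k hk => bdd k hk⟩ ⟨kp, hkp⟩
  -- m + l ∈ S and m - l ∈ S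
  have h1' : 0 < j (m + l) 0 := (shift m).mpr hm
  have h2' : 0 < j (m - l + l) 0 := by rw [sub_add_cancel]; exact hm
  have h2'' : 0 < j (m - l) 0 := (shift (m - l)).mp h2'
  have le1 := hmin _ h1'
  have le2 := hmin _ h2''
  omega
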